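/- The Conway graph invariant satisfies the 2-term relation: for any graph G and any ordered pair of distinct vertices A, B, ν(G) = ν(G̃_{AB}). -/

import Mathlib

open Classical in
noncomputable def adjM {V : Type} [Fintype V] [DecidableEq V] (G : SimpleGraph V) :
    Matrix V V (ZMod 2) :=
  fun i j => if G.Adj i j then 1 else 0

open Classical in
noncomputable def conway {V : Type} [Fintype V] [DecidableEq V] (G : SimpleGraph V) :
    Polynomial ℂ :=
  if (adjM G).det ≠ 0 then (-(Polynomial.X : Polynomial ℂ)) ^ (Fintype.card V / 2) else 0

/- `tilde G A B` toggles the adjacency to `A` of every vertex `v ∉ {A,B}` adjacent to `B`. -/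
def tilde {V : Type} (G : SimpleGraph V) (A B : V) : SimpleGraph V where
  Adj x y := Xor' (G.Adj x y)
    ((x = A ∧ y ≠ A ∧ y ≠ B ∧ G.Adj y B) ∨ (y = A ∧ x ≠ A ∧ x ≠ B ∧ G.Adj x B))
  symm := by
    refine ⟨fun x y h => ?_⟩
    have hxy : G.Adj x y ↔ G.Adj y x := ⟨fun h => h.symm, fun h => h.symm⟩
    unfold Xor' Xor at h ⊢
    tauto
  loopless := by
    refine ⟨fun x h => ?_⟩
    have : ¬ G.Adj x x := G.loopless.irrefl x
    unfold Xor' Xor at h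
    tauto

/-!
Over `ZMod 2` the adjacency matrix of `tilde G A B` is `T * adjM G * Tᵀ` with `T` the
transvection `A ↦ A + B`: the move is the change of basis `A ↦ A + B` of the bilinear form
given by `adjM G`. Since `det T = 1` for `A ≠ B`, the determinant, hence nondegeneracy and
the Conway invariant, is unchanged.
-/

open Matrix

theorem Matrix.transvection_transpose {n R : Type*} [DecidableEq n] [CommRing R] (i j : n)
    (c : R) :
    (transvection i j c)ᵀ = transvection j i c := by
  simp [transvection, transpose_single]

section Tilde

variable {V : Type} (G : SimpleGraph V) {A B : V}

theorem tilde_adj {x y : V} :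
    (tilde G A B).Adj x y ↔ Xor (G.Adj x y)
      ((x = A ∧ y ≠ A ∧ y ≠ B ∧ G.Adj y B) ∨ (y = A ∧ x ≠ A ∧ x ≠ B ∧ G.Adj x B)) :=
  Iff.rfl

theorem tilde_adj_of_ne {x y : V} (hx : x ≠ A) (hy : y ≠ A) :
    (tilde G A B).Adj x y ↔ G.Adj x y := by
  simp [tilde_adj, hx, hy, Xor]

theorem tilde_adj_left {y : V} (hy : y ≠ A) :
    (tilde G A B).Adj A y ↔ Xor (G.Adj A y) (G.Adj B y) := by
  by_cases hyB : y = B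
  · subst hyB; simp [tilde_adj, hy]
  · simp [tilde_adj, hy, hyB, G.adj_comm y B]

end Tilde

section AdjM

variable {V : Type} [Fintype V] [DecidableEq V] (G : SimpleGraph V)

theorem adjM_apply_self (x : V) : adjM G x x = 0 := by
  simp [adjM]

theorem adjM_comm (x y : V) : adjM G x y = adjM G y x := by
  unfold adjM; rw [G.adj_comm]

theorem adjM_tilde_apply_left {A B y : V} (hy : y ≠ A) :
    adjM (tilde G A B) A y = adjM G A y + adjM G B y := by
  have h := tilde_adj_left G (B := B) hy
  by_cases h₁ : G.Adj A y <;> by_cases h₂ : G.Adj B y <;>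
    simp [adjM, h, h₁, h₂, Xor, CharTwo.add_self_eq_zero]

theorem adjM_tilde_apply_of_ne {A B x y : V} (hx : x ≠ A) (hy : y ≠ A) :
    adjM (tilde G A B) x y = adjM G x y := by
  unfold adjM; rw [tilde_adj_of_ne G hx hy]

theorem adjM_tilde (A B : V) :
    adjM (tilde G A B) = transvection A B 1 * adjM G * (transvection A B 1)ᵀ := by
  rw [transvection_transpose]
  ext x y
  by_cases hx : x = A <;> by_cases hy : y = A
  · subst x y
    -- the entries `adjM G A B` and `adjM G B A` added to the corner cancel in characteristic 2
    simp [adjM_apply_self, adjM_comm G B, CharTwo.add_self_eq_zero]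
  · subst x
    rw [adjM_tilde_apply_left G hy, mul_transvection_apply_of_ne B A _ _ hy,
      transvection_mul_apply_same, one_mul]
  · subst y
    rw [adjM_comm, adjM_tilde_apply_left G hx, adjM_comm G A, adjM_comm G B,
      mul_transvection_apply_same, transvection_mul_apply_of_ne A B _ _ hx,
      transvection_mul_apply_of_ne A B _ _ hx, one_mul]
  · rw [adjM_tilde_apply_of_ne G hx hy, mul_transvection_apply_of_ne B A _ _ hy,
      transvection_mul_apply_of_ne A B _ _ hx]

theorem det_adjM_tilde {A B : V} (hAB : A ≠ B) :
    (adjM (tilde G A B)).det = (adjM G).det := by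
  rw [adjM_tilde, det_mul, det_mul, det_transpose, det_transvection_of_ne A B hAB, one_mul,
    mul_one]

end AdjM

/-- The Conway graph invariant satisfies the 2-term relation:
for any graph `G` and any ordered pair of distinct vertices `A, B`,
`ν(G) = ν(G̃_{AB})`. -/
theorem conway_two_term {V : Type} [Fintype V] [DecidableEq V]
    (G : SimpleGraph V) (A B : V) (hAB : A ≠ B) :
    conway G = conway (tilde G A B) := by
  rw [conway, conway, det_adjM_tilde G hAB]
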